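/- Let A ∈ ℍ[t] be nonzero and reduced with respect to i. Then the vectorial polynomial A·i·Ā has no real polynomial factor of positive degree: whenever ψ ∈ ℝ[t] and Q ∈ ℍ[t] satisfy A·i·Ā = ψ·Q, the polynomial ψ is constant. -/

import Mathlib

/-!
Let `π` be a monic irreducible real factor of `ψ`, of degree `1` or `2`. Since `π` is central
in `ℍ[t]`, dividing `A = π·B + R` with `deg R < deg π` shows that `π` divides `R·i·R̄`.
Now `R ≠ 0`, as `A` has no real factor, and a nonzero constant `R` is impossible for degree
reasons. So `π` is quadratic and `R = a·(t - q)` with `a ≠ 0`; then `(t - q)·i·(t - q̄) = i·π`,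
and the `j`- and `k`-components of its linear coefficient force `q ∈ ℝ + ℝi`. Hence `q`
commutes with `i`, `π = (t - q̄)·(t - q)`, and `t - q` is a right factor of `A` with
coefficients in `ℝ + ℝi`, contradicting reducedness.
-/

open Polynomial

noncomputable section

/-- The quaternion unit `i`. -/
def qi : Quaternion ℝ := ⟨0, 1, 0, 0⟩

/-- Embedding of real polynomials into quaternion polynomials (scalar coefficients). -/
def toQ : Polynomial ℝ →+* Polynomial (Quaternion ℝ) :=
  mapRingHom (algebraMap ℝ (Quaternion ℝ))

/-- Coefficientwise quaternion conjugation of a quaternion polynomial. -/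
def pconj (p : Polynomial (Quaternion ℝ)) : Polynomial (Quaternion ℝ) :=
  p.sum fun n a => monomial n (star a)

/-- `A ∈ ℍ[t]` is *reduced with respect to `i`* if it has no real polynomial factor of
positive degree and no right factor of positive degree all of whose coefficients lie in the
subalgebra of `ℍ` generated by `1` and `i` (i.e. have vanishing `j`- and `k`-components). -/
def ReducedWrtI (A : Polynomial (Quaternion ℝ)) : Prop :=
  (∀ ψ : Polynomial ℝ, ∀ A' : Polynomial (Quaternion ℝ), A = toQ ψ * A' → ψ.natDegree = 0) ∧
  (∀ A' R : Polynomial (Quaternion ℝ), A = A' * R →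
    (∀ n, (R.coeff n).imJ = 0 ∧ (R.coeff n).imK = 0) → R.natDegree = 0)

local notation "ℍ" => Quaternion ℝ

namespace Polynomial

lemma eq_of_dvd_of_natDegree_le_of_leadingCoeff' {R : Type*} [Ring R] [IsDomain R]
    {p q : R[X]} (hpq : p ∣ q) (hdeg : q.natDegree ≤ p.natDegree)
    (hlc : p.leadingCoeff = q.leadingCoeff) : p = q := by
  obtain ⟨u, rfl⟩ := hpq
  rcases eq_or_ne (p * u) 0 with h0 | h0
  · simp_all
  obtain ⟨hp, hu⟩ := mul_ne_zero_iff.1 h0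
  have hu0 : u.natDegree = 0 := by rw [natDegree_mul hp hu] at hdeg; omega
  rw [eq_C_of_natDegree_eq_zero hu0, leadingCoeff_mul, leadingCoeff_C, left_eq_mul₀
    (leadingCoeff_ne_zero.2 hp)] at hlc
  rw [eq_C_of_natDegree_eq_zero hu0, hlc, C_1, mul_one]

end Polynomial

@[simp] lemma qi_re : qi.re = 0 := rfl
@[simp] lemma qi_imI : qi.imI = 1 := rfl
@[simp] lemma qi_imJ : qi.imJ = 0 := rfl
@[simp] lemma qi_imK : qi.imK = 0 := rfl

lemma qi_ne_zero : qi ≠ 0 := fun h => by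
  simpa [Quaternion.imI_zero] using congrArg QuaternionAlgebra.imI h

lemma commute_qi_of_imJ_imK_eq_zero {q : ℍ} (hJ : q.imJ = 0) (hK : q.imK = 0) :
    Commute q qi := by
  ext <;> simp [hJ, hK]

lemma imJ_imK_eq_zero_of_mul_qi_add_qi_mul_star {q : ℍ} {c : ℝ}
    (h : -(q * qi) - qi * star q = (c : ℍ) * qi) : q.imJ = 0 ∧ q.imK = 0 := by
  constructor
  · simpa using congrArg (·.imK) h
  · simpa [← neg_add'] using congrArg (·.imJ) h

lemma coeff_X_sub_C_imJ_imK_eq_zero {q : ℍ} (hJ : q.imJ = 0) (hK : q.imK = 0) (n : ℕ) :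
    ((X - C q).coeff n).imJ = 0 ∧ ((X - C q).coeff n).imK = 0 := by
  rcases n with _ | _ | n <;>
    simp [coeff_X, coeff_C, hJ, hK, Quaternion.imJ_one, Quaternion.imK_one, Quaternion.imJ_zero,
      Quaternion.imK_zero]

@[simp] lemma coeff_pconj (p : ℍ[X]) (n : ℕ) : (pconj p).coeff n = star (p.coeff n) := by
  classical
  rw [pconj, Polynomial.sum, finsetSum_coeff]
  simp only [coeff_monomial, Finset.sum_ite_eq', mem_support_iff, ne_eq, ite_not]
  split_ifs with h <;> simp [h]

lemma pconj_add (p q : ℍ[X]) : pconj (p + q) = pconj p + pconj q := by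
  ext n : 1; simp

lemma pconj_mul (p q : ℍ[X]) : pconj (p * q) = pconj q * pconj p := by
  ext n : 1
  rw [coeff_pconj, coeff_mul, coeff_mul, star_sum,
    ← Finset.Nat.sum_antidiagonal_swap (f := fun x => (pconj q).coeff x.1 * (pconj p).coeff x.2)]
  simp

@[simp] lemma pconj_C (a : ℍ) : pconj (C a) = C (star a) := by
  ext n : 1; simp [coeff_C, apply_ite star]

lemma pconj_X_sub_C (a : ℍ) : pconj (X - C a) = X - C (star a) := by
  ext n : 1; simp [coeff_X, coeff_C, apply_ite star]

lemma pconj_toQ (f : ℝ[X]) : pconj (toQ f) = toQ f := by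
  ext n : 1; simp [toQ, Quaternion.algebraMap_def]

lemma natDegree_toQ (f : ℝ[X]) : (toQ f).natDegree = f.natDegree :=
  natDegree_map_eq_of_injective (algebraMap ℝ ℍ).injective f

lemma toQ_commute (f : ℝ[X]) (P : ℍ[X]) : Commute (toQ f) P := by
  ext n : 1
  rw [coeff_mul, coeff_mul,
    ← Finset.Nat.sum_antidiagonal_swap (f := fun x => P.coeff x.1 * (toQ f).coeff x.2)]
  refine Finset.sum_congr rfl fun x _ => ?_
  simpa [toQ] using Algebra.commutes (f.coeff x.1) (P.coeff x.2)

lemma toQ_dvd_mul_mul {f : ℝ[X]} {P : ℍ[X]} (h : toQ f ∣ P) (U V : ℍ[X]) :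
    toQ f ∣ U * P * V := by
  obtain ⟨W, rfl⟩ := h
  exact ⟨U * W * V, by rw [← mul_assoc U, ← (toQ_commute f U).eq, mul_assoc, mul_assoc,
    mul_assoc]⟩

lemma toQ_dvd_of_dvd_C_mul_mul_C {f : ℝ[X]} {P : ℍ[X]} {a b : ℍ} (ha : a ≠ 0) (hb : b ≠ 0)
    (h : toQ f ∣ C a * P * C b) : toQ f ∣ P := by
  convert toQ_dvd_mul_mul h (C a⁻¹) (C b⁻¹) using 1
  simp only [← mul_assoc, ← C_mul, inv_mul_cancel₀ ha, C_1, one_mul]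
  rw [mul_assoc, ← C_mul, mul_inv_cancel₀ hb, C_1, mul_one]

lemma toQ_dvd_sandwich_add_iff (f : ℝ[X]) (B R M : ℍ[X]) :
    toQ f ∣ (toQ f * B + R) * M * pconj (toQ f * B + R) ↔ toQ f ∣ R * M * pconj R := by
  have expand : (toQ f * B + R) * M * pconj (toQ f * B + R) =
      toQ f * (B * M * pconj R + B * M * pconj B * toQ f + R * M * pconj B) +
        R * M * pconj R := by
    rw [pconj_add, pconj_mul, pconj_toQ, mul_add (toQ f) _ (R * M * pconj B),
      (toQ_commute f (R * M * pconj B)).eq]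
    noncomm_ring
  rw [expand, dvd_add_right (dvd_mul_right _ _)]

lemma imJ_imK_eq_zero_and_toQ_eq_of_dvd {π : ℝ[X]} (hπ : π.Monic) (hd : π.natDegree = 2)
    {q : ℍ} (h : toQ π ∣ (X - C q) * C qi * (X - C (star q))) :
    q.imJ = 0 ∧ q.imK = 0 ∧ toQ π = (X - C (star q)) * (X - C q) := by
  set T := (X - C q) * C qi * (X - C (star q)) with hTdef
  have hXq : X - C q ≠ 0 := X_sub_C_ne_zero q
  have hT : toQ π * C qi = T := by
    refine eq_of_dvd_of_natDegree_le_of_leadingCoeff' ?_ ?_ ?_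
    · obtain ⟨W, hW⟩ := h
      exact ⟨C qi⁻¹ * W, by rw [hW, mul_assoc, ← mul_assoc (C qi), ← C_mul,
        mul_inv_cancel₀ qi_ne_zero, C_1, one_mul]⟩
    · rw [natDegree_mul_C qi_ne_zero, natDegree_toQ, hd, hTdef, natDegree_mul
        (mul_ne_zero hXq (C_ne_zero.2 qi_ne_zero)) (X_sub_C_ne_zero _), natDegree_mul hXq
        (C_ne_zero.2 qi_ne_zero)]
      simp
    · simp [T, leadingCoeff_mul, (hπ.map (algebraMap ℝ ℍ)).leadingCoeff, toQ]
  obtain ⟨hJ, hK⟩ : q.imJ = 0 ∧ q.imK = 0 := by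
    refine imJ_imK_eq_zero_of_mul_qi_add_qi_mul_star (c := π.coeff 1) ?_
    simpa [T, toQ, coeff_mul_X_sub_C, coeff_mul_C, Quaternion.algebraMap_def] using
      (congrArg (·.coeff 1) hT).symm
  refine ⟨hJ, hK, mul_right_cancel₀ (C_ne_zero.2 qi_ne_zero) ?_⟩
  have hq' := commute_qi_of_imJ_imK_eq_zero (q := star q) (by simpa) (by simpa)
  have hqq : Commute (X - C q) (X - C (star q)) := (commute_X _).sub_left
    ((commute_X _).symm.sub_right (star_comm_self.symm.map C))
  rw [hT, hTdef, mul_assoc, ((commute_X _).symm.sub_right (hq'.symm.map C)).eq, ← mul_assoc,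
    hqq.eq]

lemma exists_X_sub_C_right_factor_of_dvd {π : ℝ[X]} (hπ : π.Monic) (hd : π.natDegree = 2)
    {R : ℍ[X]} (hR : R.natDegree = 1) (h : toQ π ∣ R * C qi * pconj R) :
    ∃ q : ℍ, q.imJ = 0 ∧ q.imK = 0 ∧
      ∃ U V : ℍ[X], toQ π = U * (X - C q) ∧ R = V * (X - C q) := by
  set a := R.coeff 1
  have ha : a ≠ 0 := by
    simpa [a, ← hR] using leadingCoeff_ne_zero.2 (ne_zero_of_natDegree_gt (hR ▸ one_pos))
  set q := -(a⁻¹ * R.coeff 0) with hq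
  have hRq : R = C a * (X - C q) := by
    rw [mul_sub, C_mul_X_eq_monomial, ← C_mul, hq, mul_neg, ← mul_assoc, mul_inv_cancel₀ ha,
      one_mul, C_neg, sub_neg_eq_add, ← C_mul_X_eq_monomial]
    exact eq_X_add_C_of_natDegree_le_one hR.le
  have hsandwich : R * C qi * pconj R =
      C a * ((X - C q) * C qi * (X - C (star q))) * C (star a) := by
    rw [hRq, pconj_mul, pconj_C, pconj_X_sub_C]
    noncomm_ring
  rw [hsandwich] at h
  obtain ⟨hJ, hK, hπq⟩ := imJ_imK_eq_zero_and_toQ_eq_of_dvd hπ hd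
    (toQ_dvd_of_dvd_C_mul_mul_C ha (star_ne_zero.2 ha) h)
  exact ⟨q, hJ, hK, _, _, hπq, hRq⟩

lemma natDegree_eq_zero_of_toQ_dvd_sandwich {f : ℝ[X]} {R : ℍ[X]} (hR0 : R ≠ 0)
    (hR : R.natDegree = 0) (h : toQ f ∣ R * C qi * pconj R) : f.natDegree = 0 := by
  rw [eq_C_of_natDegree_eq_zero hR, pconj_C, ← C_mul, ← C_mul] at h
  have hb : R.coeff 0 ≠ 0 := fun h0 => hR0 (by rw [eq_C_of_natDegree_eq_zero hR, h0, C_0])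
  have hdeg := natDegree_le_of_dvd h (C_ne_zero.2 (by simp [hb, qi_ne_zero]))
  rwa [natDegree_C, natDegree_toQ, Nat.le_zero] at hdeg

theorem no_real_factor_of_reduced_general (A : Polynomial (Quaternion ℝ))
    (hred : ReducedWrtI A) (ψ : Polynomial ℝ) (Q : Polynomial (Quaternion ℝ))
    (h : A * Polynomial.C qi * pconj A = toQ ψ * Q) : ψ.natDegree = 0 := by
  by_contra hψ
  obtain ⟨π, hπ, hirr, hπψ⟩ :=
    exists_monic_irreducible_factor ψ (not_isUnit_of_natDegree_pos ψ (Nat.pos_of_ne_zero hψ))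
  have hpos : 0 < π.natDegree := hirr.natDegree_pos
  have hdvd : toQ π ∣ A * C qi * pconj A := h ▸ (map_dvd toQ hπψ).mul_right Q
  obtain ⟨B, R, hA, hRdeg⟩ : ∃ B R, A = toQ π * B + R ∧ R.degree < (toQ π).degree :=
    ⟨_, _, (modByMonic_add_div A (toQ π)).symm.trans (add_comm _ _),
      degree_modByMonic_lt A (hπ.map _)⟩
  rw [hA, toQ_dvd_sandwich_add_iff] at hdvd
  have hR0 : R ≠ 0 := by
    rintro rfl
    exact hpos.ne' (hred.1 π B (by rw [hA, add_zero]))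
  have hRπ : R.natDegree < π.natDegree := natDegree_toQ π ▸ natDegree_lt_natDegree hR0 hRdeg
  have hπ2 : π.natDegree ≤ 2 := natDegree_le_iff_degree_le.2 hirr.degree_le_two
  obtain hR | hR : R.natDegree = 0 ∨ R.natDegree = 1 := by omega
  · exact hpos.ne' (natDegree_eq_zero_of_toQ_dvd_sandwich hR0 hR hdvd)
  · obtain ⟨q, hJ, hK, U, V, hU, hV⟩ :=
      exists_X_sub_C_right_factor_of_dvd hπ (by omega) hR hdvd
    have hfactor : A = (B * U + V) * (X - C q) := by
      rw [hA, (toQ_commute π B).eq, hU, hV, add_mul, mul_assoc]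
    have hdeg := hred.2 _ _ hfactor (coeff_X_sub_C_imJ_imK_eq_zero hJ hK)
    rw [natDegree_X_sub_C] at hdeg
    exact one_ne_zero hdeg

/-- If `A ∈ ℍ[t]` is nonzero and reduced with respect to `i`, then the
vectorial polynomial `A·i·Ā` has no real polynomial factor of positive degree. -/
theorem no_real_factor_of_reduced (A : Polynomial (Quaternion ℝ)) (hA : A ≠ 0)
    (hred : ReducedWrtI A) (ψ : Polynomial ℝ) (Q : Polynomial (Quaternion ℝ))
    (h : A * Polynomial.C qi * pconj A = toQ ψ * Q) : ψ.natDegree = 0 :=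
  no_real_factor_of_reduced_general A hred ψ Q h
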